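/- arXiv:1903.06507 — 3 statements merged into one kernel-verified Lean document; each statement's English description precedes it below -/
import Mathlib

section
/- Let $\mathcal{T}>0$, $m\in\mathbb{N}$, $\varrho_0>0$, $\tau:[0,\infty)\to(0,\infty)$ continuous, $\rho(t)=\exp(-\int_0^t \tau(s)^{-1}ds)$, and $h$ a positive decreasing function on $[0,\mathcal{T}]$. Define $\ell^\varrho(t) = \frac{[h(t)-h(\mathcal{T})]^m}{\int_0^{\mathcal{T}}\rho^{-1}(s)[h(s)-h(\mathcal{T})]^m ds}\,\chi_{[0,\mathcal{T})}(t)$. Then the solution of $\tau\varrho'+\varrho=-\tau\varrho_0\ell^\varrho$ with $\varrho(0)=\varrho_0$ vanishes identically for $t\geq\mathcal{T}$. -/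
/-!
With `E = ρ⁻¹ = exp ∫₀ᵗ τ⁻¹`, the equation reads `(ϱ E)' = -ϱ₀ E ℓ`, hence
`ϱ(t) E(t) = ϱ₀ (1 - ∫₀ᵗ ℓ / ρ)`. The control `ℓ` is normalised exactly so that `∫₀ᵗ ℓ / ρ = 1`
as soon as `t ≥ T`; strict monotonicity of `h` makes the normalising integral positive.
-/

open Set MeasureTheory intervalIntegral Real

/-- The paper's `ρ` is the reciprocal of this. -/
noncomputable def integratingFactor (τ : ℝ → ℝ) (t : ℝ) : ℝ :=
  exp (∫ s in (0:ℝ)..t, (τ s)⁻¹)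

theorem integratingFactor_zero (τ : ℝ → ℝ) : integratingFactor τ 0 = 1 := by
  simp [integratingFactor]

theorem integratingFactor_pos (τ : ℝ → ℝ) (t : ℝ) : 0 < integratingFactor τ t :=
  exp_pos _

section IntegratingFactor

variable {τ : ℝ → ℝ} {b : ℝ}

theorem continuousOn_integratingFactor (hτ : ContinuousOn τ (Icc 0 b))
    (hτ0 : ∀ s ∈ Icc 0 b, τ s ≠ 0) : ContinuousOn (integratingFactor τ) (Icc 0 b) :=
  have hprim : ContinuousOn (fun u => ∫ s in Ioc 0 u, (τ s)⁻¹) (Icc 0 b) :=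
    continuousOn_primitive (hτ.inv₀ hτ0).integrableOn_Icc
  continuous_exp.comp_continuousOn (hprim.congr fun _ hu => integral_of_le hu.1)

theorem hasDerivAt_integratingFactor (hτ : ContinuousOn τ (Icc 0 b))
    (hτ0 : ∀ s ∈ Icc 0 b, τ s ≠ 0) {t : ℝ} (ht : t ∈ Ioo 0 b) :
    HasDerivAt (integratingFactor τ) (integratingFactor τ t / τ t) t := by
  have hinv : ContinuousOn (fun s => (τ s)⁻¹) (Icc 0 b) := hτ.inv₀ hτ0
  have hprim : HasDerivAt (fun u => ∫ s in (0:ℝ)..u, (τ s)⁻¹) (τ t)⁻¹ t :=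
    integral_hasDerivAt_right
      ((hinv.mono (Icc_subset_Icc le_rfl ht.2.le)).intervalIntegrable_of_Icc ht.1.le)
      ((hinv.mono Ioo_subset_Icc_self).stronglyMeasurableAtFilter isOpen_Ioo t ht)
      (hinv.continuousAt (Icc_mem_nhds ht.1 ht.2))
  rw [div_eq_mul_inv]
  exact hprim.exp

end IntegratingFactor

theorem mul_integratingFactor_eq_add_integral {τ ϱ ϱ' f : ℝ → ℝ} {t : ℝ} (ht : 0 ≤ t)
    (hτ : ContinuousOn τ (Icc 0 t)) (hτ0 : ∀ s ∈ Icc 0 t, τ s ≠ 0)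
    (hϱ : ContinuousOn ϱ (Icc 0 t))
    (hode : ∀ s ∈ Ioo 0 t, HasDerivAt ϱ (ϱ' s) s ∧ τ s * ϱ' s + ϱ s = τ s * f s)
    (hf : IntervalIntegrable f volume 0 t) :
    ϱ t * integratingFactor τ t = ϱ 0 + ∫ s in (0:ℝ)..t, integratingFactor τ s * f s := by
  have hE := continuousOn_integratingFactor hτ hτ0
  have hderiv : ∀ s ∈ Ioo 0 t,
      HasDerivAt (fun u => ϱ u * integratingFactor τ u) (integratingFactor τ s * f s) s := by
    intro s hs
    obtain ⟨hϱs, heq⟩ := hode s hs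
    refine (hϱs.mul (hasDerivAt_integratingFactor hτ hτ0 hs)).congr_deriv ?_
    have hτs := hτ0 s (Ioo_subset_Icc_self hs)
    field_simp
    linear_combination integratingFactor τ s * heq
  rw [integral_eq_sub_of_hasDerivAt_of_le ht (hϱ.mul hE) hderiv
    (hf.continuousOn_mul (by rwa [uIcc_of_le ht])), Pi.mul_apply, Pi.mul_apply,
    integratingFactor_zero]
  ring

theorem AntitoneOn.pow_sub_right {h : ℝ → ℝ} {a b : ℝ} (hh : AntitoneOn h (Icc a b)) (m : ℕ) :
    AntitoneOn (fun s => (h s - h b) ^ m) (Icc a b) := by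
  intro x hx y hy hxy
  have hb : b ∈ Icc a b := ⟨hy.1.trans hy.2, le_rfl⟩
  exact pow_le_pow_left₀ (sub_nonneg.2 (hh hy hb hy.2)) (sub_le_sub_right (hh hx hy hxy) _) m

theorem integral_mul_pow_sub_pos {w h : ℝ → ℝ} {a b : ℝ} (hab : a < b)
    (hw : ContinuousOn w (Icc a b)) (hw0 : ∀ s ∈ Ioo a b, 0 < w s)
    (hh : StrictAntiOn h (Icc a b)) (m : ℕ) :
    0 < ∫ s in a..b, w s * (h s - h b) ^ m := by
  have hint : IntervalIntegrable (fun s => (h s - h b) ^ m) volume a b :=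
    AntitoneOn.intervalIntegrable <| by
      rw [uIcc_of_le hab.le]
      exact hh.antitoneOn.pow_sub_right m
  refine intervalIntegral_pos_of_pos_on (hint.continuousOn_mul (by rwa [uIcc_of_le hab.le]))
    (fun s hs => mul_pos (hw0 s hs) (pow_pos (sub_pos.2 ?_) m)) hab
  exact hh (Ioo_subset_Icc_self hs) (right_mem_Icc.2 hab.le) hs.2

theorem integral_mul_indicator_div_integral {w φ : ℝ → ℝ} {a T t : ℝ} (haT : a ≤ T)
    (hTt : T ≤ t) (hD : ∫ s in a..T, w s * φ s ≠ 0) :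
    ∫ s in a..t, w s * (Ico a T).indicator (fun s => φ s / ∫ u in a..T, w u * φ u) s = 1 := by
  simp_rw [← indicator_mul_right]
  have hset : Ioc a t ∩ Ico a T = Ioo a T := by
    ext s
    simp only [mem_inter_iff, mem_Ioc, mem_Ico, mem_Ioo]
    grind
  rw [integral_of_le (haT.trans hTt), setIntegral_indicator measurableSet_Ico, hset,
    ← integral_Ioc_eq_integral_Ioo, ← integral_of_le haT]
  simp_rw [← mul_div_assoc]
  rw [intervalIntegral.integral_div, div_self hD]

theorem relaxation_finite_stopping_time_general (T ρ0 : ℝ) (hT : 0 < T) (m : ℕ)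
    (τ h : ℝ → ℝ)
    (hτ : ContinuousOn τ (Set.Ici 0)) (hτpos : ∀ t ∈ Set.Ici (0:ℝ), 0 < τ t)
    (hhdec : StrictAntiOn h (Set.Icc 0 T))
    (ρ : ℝ → ℝ) (hρ : ∀ t, ρ t = Real.exp (-∫ s in (0:ℝ)..t, (τ s)⁻¹))
    (ℓ : ℝ → ℝ)
    (hℓ : ∀ t, ℓ t = Set.indicator (Set.Ico 0 T)
      (fun t => (h t - h T)^m / ∫ s in (0:ℝ)..T, (ρ s)⁻¹ * (h s - h T)^m) t)
    (ϱ ϱ' : ℝ → ℝ)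
    (hcont : ContinuousOn ϱ (Set.Ici 0))
    (hode : ∀ t ∈ Set.Ioi (0:ℝ),
      HasDerivAt ϱ (ϱ' t) t ∧ τ t * ϱ' t + ϱ t = -(τ t * ρ0 * ℓ t))
    (hinit : ϱ 0 = ρ0) :
    ∀ t, T ≤ t → ϱ t = 0 := by
  intro t hTt
  have ht : 0 ≤ t := hT.le.trans hTt
  have hτ0 : ∀ b, ∀ s ∈ Icc 0 b, τ s ≠ 0 := fun _ s hs => (hτpos s hs.1).ne'
  have hρinv : ∀ s, (ρ s)⁻¹ = integratingFactor τ s := fun s => by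
    rw [hρ, exp_neg, inv_inv, integratingFactor]
  simp_rw [hρinv] at hℓ
  have hD : 0 < ∫ s in (0:ℝ)..T, integratingFactor τ s * (h s - h T) ^ m :=
    integral_mul_pow_sub_pos hT
      (continuousOn_integratingFactor (hτ.mono Icc_subset_Ici_self) (hτ0 T))
      (fun s _ => integratingFactor_pos τ s) hhdec m
  have hℓint : Integrable ℓ := by
    rw [funext hℓ, integrable_indicator_iff measurableSet_Ico]
    exact (((hhdec.antitoneOn.pow_sub_right m).integrableOn_isCompact isCompact_Icc).mono_set
      Ico_subset_Icc_self).div_const _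
  have hsol := mul_integratingFactor_eq_add_integral (f := fun s => -(ρ0 * ℓ s)) ht
    (hτ.mono Icc_subset_Ici_self) (hτ0 t) (hcont.mono Icc_subset_Ici_self)
    (fun s hs => ⟨(hode s hs.1).1, by rw [(hode s hs.1).2]; ring⟩)
    (hℓint.const_mul ρ0).neg.intervalIntegrable
  have hmass : ∫ s in (0:ℝ)..t, integratingFactor τ s * ℓ s = 1 := by
    simpa only [← hℓ] using integral_mul_indicator_div_integral hT.le hTt hD.ne'
  simp only [mul_neg, mul_left_comm _ ρ0, intervalIntegral.integral_neg,
    intervalIntegral.integral_const_mul, hmass, hinit] at hsol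
  exact (mul_eq_zero.1 (by linarith)).resolve_right (integratingFactor_pos τ t).ne'

theorem relaxation_finite_stopping_time (T ρ0 : ℝ) (hT : 0 < T) (hρ0 : 0 < ρ0) (m : ℕ)
    (τ h : ℝ → ℝ)
    (hτ : ContinuousOn τ (Set.Ici 0)) (hτpos : ∀ t ∈ Set.Ici (0:ℝ), 0 < τ t)
    (hh : ∀ t ∈ Set.Icc 0 T, 0 < h t) (hhdec : StrictAntiOn h (Set.Icc 0 T))
    (ρ : ℝ → ℝ) (hρ : ∀ t, ρ t = Real.exp (-∫ s in (0:ℝ)..t, (τ s)⁻¹))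
    (ℓ : ℝ → ℝ)
    (hℓ : ∀ t, ℓ t = Set.indicator (Set.Ico 0 T)
      (fun t => (h t - h T)^m / ∫ s in (0:ℝ)..T, (ρ s)⁻¹ * (h s - h T)^m) t)
    (ϱ ϱ' : ℝ → ℝ)
    (hcont : ContinuousOn ϱ (Set.Ici 0))
    (hode : ∀ t ∈ Set.Ioi (0:ℝ),
      HasDerivAt ϱ (ϱ' t) t ∧ τ t * ϱ' t + ϱ t = -(τ t * ρ0 * ℓ t))
    (hinit : ϱ 0 = ρ0) :
    ∀ t, T ≤ t → ϱ t = 0 :=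
  relaxation_finite_stopping_time_general T ρ0 hT m τ h hτ hτpos hhdec ρ hρ ℓ hℓ ϱ ϱ' hcont hode
    hinit
end

section
/- Let $\mathcal{T}>0$, $n\in\mathbb{N}$, $p_n(t)=(\mathcal{T}-t)^n$, $I_n(t)=\int_0^t e^s p_n(s)\,ds$, and $\varrho_n(t)=e^{-t}[1-I_n(t)/I_n(\mathcal{T})]$ for $t\in[0,\mathcal{T}]$, extended by $0$ outside $[0,\mathcal{T}]$. Then $\varrho_n$ is decreasing and convex on $(0,\mathcal{T})$, and $\varrho_n^{(k)}(t)\to 0$ as $t\to\mathcal{T}^-$ for each $k\in\{0,1,\ldots,n-1\}$. -/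
/-!
Write `g(t) = e^{-t} (1 - I(t) / I(T))` and `q(t) = (T - t)^n / I(T)`, so that `ϱ = g` on `(0, T)`.
Since `I' = e^t (T - t)^n`, the function `g` solves the linear equation `g' = -g - q`.
On `[0, T]` both `g` and `q` are nonnegative and `q` is nonincreasing, so `g' = -g - q ≤ 0` and
`g'' = g + q - q' ≥ 0`. Differentiating the equation `k` times expresses `g^{(k)}` through `g`
and `q, q', …, q^{(k-1)}`; all of these vanish at `T` when `k < n`, so `g^{(k)}(T) = 0`, and
`g` is smooth, so `ϱ^{(k)} = g^{(k)}` tends to `0` at `T⁻`.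
-/

open Set Filter Topology
open scoped ContDiff

section LinearODE

variable {g q : ℝ → ℝ}

lemma antitoneOn_of_hasDerivAt_eq_neg_sub {s : Set ℝ} (hs : Convex ℝ s)
    (hg : ∀ t, HasDerivAt g (-g t - q t) t) (hg₀ : ∀ t ∈ s, 0 ≤ g t)
    (hq₀ : ∀ t ∈ s, 0 ≤ q t) : AntitoneOn g s :=
  antitoneOn_of_hasDerivWithinAt_nonpos hs (fun t _ => (hg t).continuousAt.continuousWithinAt)
    (fun t _ => (hg t).hasDerivWithinAt)
    fun t ht => by linarith [hg₀ t (interior_subset ht), hq₀ t (interior_subset ht)]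

lemma convexOn_of_hasDerivAt_eq_neg_sub {s : Set ℝ} (hs : Convex ℝ s) {q' : ℝ → ℝ}
    (hg : ∀ t, HasDerivAt g (-g t - q t) t) (hq : ∀ t, HasDerivAt q (q' t) t)
    (hg₀ : ∀ t ∈ s, 0 ≤ g t) (hq₀ : ∀ t ∈ s, 0 ≤ q t)
    (hq' : ∀ t ∈ s, q' t ≤ 0) : ConvexOn ℝ s g := by
  refine convexOn_of_hasDerivWithinAt2_nonneg hs
    (fun t _ => (hg t).continuousAt.continuousWithinAt) (fun t _ => (hg t).hasDerivWithinAt)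
    (f'' := fun t => g t + q t - q' t) (fun t _ => ?_) fun t ht => ?_
  · exact (((hg t).neg).sub (hq t)).hasDerivWithinAt.congr_deriv (by ring)
  · have := interior_subset ht
    linarith [hg₀ t this, hq₀ t this, hq' t this]

lemma contDiff_of_hasDerivAt_eq_neg_sub (hq : ContDiff ℝ ∞ q)
    (hg : ∀ t, HasDerivAt g (-g t - q t) t) : ContDiff ℝ ∞ g := by
  have hderiv : deriv g = -g - q := funext fun t => (hg t).deriv
  refine contDiff_infty.2 fun m => ?_
  induction m with
  | zero => exact contDiff_zero.2 (continuous_iff_continuousAt.2 fun t => (hg t).continuousAt)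
  | succ m ih =>
    rw [Nat.cast_succ]
    refine contDiff_succ_iff_deriv.2 ⟨fun t => (hg t).differentiableAt, by simp, ?_⟩
    rw [hderiv]
    exact ih.neg.sub (hq.of_le (mod_cast le_top))

lemma iteratedDeriv_eq_zero_of_hasDerivAt_eq_neg_sub (hq : ContDiff ℝ ∞ q)
    (hg : ∀ t, HasDerivAt g (-g t - q t) t) {a : ℝ} (hga : g a = 0) {k : ℕ}
    (hqa : ∀ j < k, iteratedDeriv j q a = 0) : iteratedDeriv k g a = 0 := by
  induction k with
  | zero => simpa using hga
  | succ k ih =>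
    have hg_smooth := contDiff_of_hasDerivAt_eq_neg_sub hq hg
    rw [iteratedDeriv_succ', show deriv g = -g - q from funext fun t => (hg t).deriv,
      iteratedDeriv_sub (f := -g) ((hg_smooth.neg.of_le (mod_cast le_top)).contDiffAt)
        ((hq.of_le (mod_cast le_top)).contDiffAt), iteratedDeriv_neg,
      ih fun j hj => hqa j (by omega), hqa k (by omega)]
    simp

end LinearODE

lemma iteratedDeriv_const_sub_pow_self_of_lt (T : ℝ) {j n : ℕ} (hj : j < n) :
    iteratedDeriv j (fun t => (T - t) ^ n) T = 0 := by
  simpa [Nat.sub_ne_zero_of_lt hj] using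
    congrFun (iteratedDeriv_comp_const_sub j (fun t : ℝ => t ^ n) T) T

lemma tendsto_iteratedDeriv_nhdsLT_of_eqOn {f g : ℝ → ℝ} {a b : ℝ} (hab : a < b)
    (hfg : EqOn f g (Ioo a b)) (hg : ContDiff ℝ ∞ g) (k : ℕ) :
    Tendsto (iteratedDeriv k f) (𝓝[<] b) (𝓝 (iteratedDeriv k g b)) := by
  refine ((hg.continuous_iteratedDeriv k (mod_cast le_top)).tendsto b).mono_left
    nhdsWithin_le_nhds |>.congr' ?_
  filter_upwards [Ioo_mem_nhdsLT hab] with t ht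
  exact (hfg.iteratedDeriv_of_isOpen isOpen_Ioo k ht).symm

section Integral

variable (T : ℝ) (n : ℕ)

lemma hasDerivAt_integral_exp_mul_pow (t : ℝ) :
    HasDerivAt (fun t => ∫ s in (0 : ℝ)..t, Real.exp s * (T - s) ^ n)
      (Real.exp t * (T - t) ^ n) t :=
  (Continuous.integral_hasStrictDerivAt (by fun_prop) 0 t).hasDerivAt

lemma strictMonoOn_integral_exp_mul_pow :
    StrictMonoOn (fun t => ∫ s in (0 : ℝ)..t, Real.exp s * (T - s) ^ n) (Iic T) := by
  refine strictMonoOn_of_hasDerivWithinAt_pos (convex_Iic T)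
    (fun t _ => (hasDerivAt_integral_exp_mul_pow T n t).continuousAt.continuousWithinAt)
    (fun t _ => (hasDerivAt_integral_exp_mul_pow T n t).hasDerivWithinAt) fun t ht => ?_
  rw [interior_Iic] at ht
  exact mul_pos (Real.exp_pos t) (pow_pos (sub_pos.2 ht) n)

end Integral

lemma hasDerivAt_exp_neg_mul_one_sub_div {I p : ℝ → ℝ} {c t : ℝ}
    (hI : HasDerivAt I (Real.exp t * p t) t) :
    HasDerivAt (fun t => Real.exp (-t) * (1 - I t / c))
      (-(Real.exp (-t) * (1 - I t / c)) - p t / c) t := by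
  have hexp : Real.exp (-t) * Real.exp t = 1 := by
    rw [← Real.exp_add, neg_add_cancel, Real.exp_zero]
  refine (((hasDerivAt_neg t).exp).mul ((hI.div_const c).const_sub 1)).congr_deriv ?_
  linear_combination (-(p t / c)) * hexp

theorem rho_n_properties (T : ℝ) (hT : 0 < T) (n : ℕ)
    (I : ℝ → ℝ) (hI : ∀ t, I t = ∫ s in (0:ℝ)..t, Real.exp s * (T - s)^n)
    (ϱ : ℝ → ℝ)
    (hϱ : ∀ t, ϱ t = if t ∈ Set.Icc (0:ℝ) T then Real.exp (-t) * (1 - I t / I T) else 0) :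
    AntitoneOn ϱ (Set.Ioo 0 T) ∧ ConvexOn ℝ (Set.Ioo 0 T) ϱ
      ∧ ∀ k < n, Filter.Tendsto (iteratedDeriv k ϱ) (nhdsWithin T (Set.Iio T)) (nhds 0) := by
  obtain rfl : I = _ := funext hI
  set I := fun t => ∫ s in (0 : ℝ)..t, Real.exp s * (T - s) ^ n
  have hmono := strictMonoOn_integral_exp_mul_pow T n
  have hIT : 0 < I T := by
    simpa [I] using hmono (show (0 : ℝ) ∈ Iic T from hT.le) self_mem_Iic hT
  set g := fun t => Real.exp (-t) * (1 - I t / I T)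
  set q := fun t => (T - t) ^ n / I T
  have hg : ∀ t, HasDerivAt g (-g t - q t) t :=
    fun t => hasDerivAt_exp_neg_mul_one_sub_div (p := fun t => (T - t) ^ n)
      (hasDerivAt_integral_exp_mul_pow T n t)
  have hq : ∀ t, HasDerivAt q (-(n * (T - t) ^ (n - 1) / I T)) t := fun t =>
    ((((hasDerivAt_id' t).const_sub T).pow n).div_const (I T)).congr_deriv (by ring)
  have hg₀ : ∀ t ∈ Ioo 0 T, 0 ≤ g t := fun t ht => mul_nonneg (Real.exp_pos _).le <|
    sub_nonneg.2 <| (div_le_one hIT).2 <| hmono.monotoneOn ht.2.le self_mem_Iic ht.2.le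
  have hq₀ : ∀ t ∈ Ioo 0 T, 0 ≤ q t := fun t ht => by have := ht.2; positivity
  have hq' : ∀ t ∈ Ioo 0 T, -(n * (T - t) ^ (n - 1) / I T) ≤ 0 := fun t ht => by
    have := ht.2
    exact neg_nonpos.2 (by positivity)
  have hϱg : EqOn g ϱ (Ioo 0 T) := fun t ht => by rw [hϱ t, if_pos (Ioo_subset_Icc_self ht)]
  refine ⟨(antitoneOn_of_hasDerivAt_eq_neg_sub (convex_Ioo 0 T) hg hg₀ hq₀).congr hϱg,
    (convexOn_of_hasDerivAt_eq_neg_sub (convex_Ioo 0 T) hg hq hg₀ hq₀ hq').congr hϱg,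
    fun k hk => ?_⟩
  have hq_smooth : ContDiff ℝ ∞ q := by fun_prop
  rw [← iteratedDeriv_eq_zero_of_hasDerivAt_eq_neg_sub hq_smooth hg (a := T)
    (by simp [g, hIT.ne']) fun j hj => by
      simp [q, iteratedDeriv_const_sub_pow_self_of_lt T (hj.trans hk)]]
  exact tendsto_iteratedDeriv_nhdsLT_of_eqOn hT hϱg.symm
    (contDiff_of_hasDerivAt_eq_neg_sub hq_smooth hg) k
end

section
/- Let $a_0\geq 1$, $\omega_0\in(0,a_0)$ and $K_1(t)=e^{-a_0 t}\cos(\omega_0 t)H(t)$ with Fourier transform $\hat K_1(\omega)=\frac{a_0-i2\pi\omega}{(a_0-i2\pi\omega)^2+\omega_0^2}$. Then $|\hat K_1(\omega)|<1$ for all $\omega\in\mathbb{R}$, so that $\alpha_1(\omega):=\log(1/|\hat K_1(\omega)|)>0$ for all $\omega$. -/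
/-!
Write `z = a₀ - 2πiω`. Then `z² + ω₀² = (z + iω₀)(z - iω₀)`, and both factors have real part `a₀ ≥ 1`,
so their squared norms `p, q` are at least `1`. Hence `pq ≥ p + q - 1`, and by the parallelogram law
`p + q = 2‖z‖² + 2ω₀²`, so `‖z² + ω₀²‖² ≥ 2‖z‖² + 2ω₀² - 1 > ‖z‖²` because `‖z‖ ≥ 1` and `ω₀ ≠ 0`.
-/

namespace Complex

lemma sq_add_sq_eq_mul (z : ℂ) (c : ℝ) : z ^ 2 + (c : ℂ) ^ 2 = (z + c * I) * (z - c * I) := by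
  ring_nf
  rw [I_sq]
  ring

lemma norm_lt_norm_sq_add_sq {z : ℂ} (hz : 1 ≤ |z.re|) {c : ℝ} (hc : c ≠ 0) :
    ‖z‖ < ‖z ^ 2 + (c : ℂ) ^ 2‖ := by
  have hz_norm : 1 ≤ ‖z‖ := hz.trans (abs_re_le_norm z)
  have h_plus : 1 ≤ ‖z + c * I‖ := by
    exact hz.trans (by simpa using abs_re_le_norm (z + c * I))
  have h_minus : 1 ≤ ‖z - c * I‖ := by
    exact hz.trans (by simpa using abs_re_le_norm (z - c * I))
  have h_parallelogram : ‖z + c * I‖ ^ 2 + ‖z - c * I‖ ^ 2 = 2 * (‖z‖ ^ 2 + c ^ 2) := by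
    rw [parallelogram_law_with_norm ℝ, norm_mul, norm_I, mul_one, norm_real, Real.norm_eq_abs,
      sq_abs]
  have hc_sq : 0 < c ^ 2 := by positivity
  refine lt_of_pow_lt_pow_left₀ 2 (norm_nonneg _) ?_
  rw [sq_add_sq_eq_mul, norm_mul, mul_pow]
  nlinarith [mul_nonneg (sub_nonneg.2 (one_le_pow₀ (n := 2) h_plus))
    (sub_nonneg.2 (one_le_pow₀ (n := 2) h_minus))]

lemma norm_div_sq_add_sq_lt_one {z : ℂ} (hz : 1 ≤ |z.re|) {c : ℝ} (hc : c ≠ 0) :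
    ‖z / (z ^ 2 + (c : ℂ) ^ 2)‖ < 1 := by
  have hz_pos : 0 < ‖z‖ := one_pos.trans_le (hz.trans (abs_re_le_norm z))
  rw [norm_div, div_lt_one (hz_pos.trans (norm_lt_norm_sq_add_sq hz hc))]
  exact norm_lt_norm_sq_add_sq hz hc

end Complex

theorem damped_cosine_attenuation_positive_general (a0 ω0 : ℝ)
    (ha0 : 1 ≤ a0) (hω0 : 0 < ω0) (ω : ℝ) :
    ‖(((a0 : ℂ) - Complex.I * (2*Real.pi*ω))
        / (((a0 : ℂ) - Complex.I * (2*Real.pi*ω))^2 + (ω0 : ℂ)^2))‖ < 1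
    ∧ 0 < Real.log (1 / ‖(((a0 : ℂ) - Complex.I * (2*Real.pi*ω))
        / (((a0 : ℂ) - Complex.I * (2*Real.pi*ω))^2 + (ω0 : ℂ)^2))‖) := by
  set z : ℂ := (a0 : ℂ) - Complex.I * (2*Real.pi*ω)
  have hz : 1 ≤ |z.re| := by simpa [z, abs_of_pos (one_pos.trans_le ha0)] using ha0
  have hz_ne : z ≠ 0 := fun h => by norm_num [h] at hz
  have h_lt_one := Complex.norm_div_sq_add_sq_lt_one hz hω0.ne'
  have h_ne_zero : z / (z ^ 2 + (ω0 : ℂ) ^ 2) ≠ 0 :=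
    div_ne_zero hz_ne (norm_pos_iff.1 ((norm_nonneg z).trans_lt
      (Complex.norm_lt_norm_sq_add_sq hz hω0.ne')))
  exact ⟨h_lt_one, Real.log_pos (one_lt_one_div (norm_pos_iff.2 h_ne_zero) h_lt_one)⟩

theorem damped_cosine_attenuation_positive (a0 ω0 : ℝ)
    (ha0 : 1 ≤ a0) (hω0 : 0 < ω0) (hωa : ω0 < a0) (ω : ℝ) :
    ‖(((a0 : ℂ) - Complex.I * (2*Real.pi*ω))
        / (((a0 : ℂ) - Complex.I * (2*Real.pi*ω))^2 + (ω0 : ℂ)^2))‖ < 1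
    ∧ 0 < Real.log (1 / ‖(((a0 : ℂ) - Complex.I * (2*Real.pi*ω))
        / (((a0 : ℂ) - Complex.I * (2*Real.pi*ω))^2 + (ω0 : ℂ)^2))‖) :=
  damped_cosine_attenuation_positive_general a0 ω0 ha0 hω0 ω
end
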